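/- Let S∞ be the finitary symmetric group of ℕ and let ρ be an irreducible unitary representation of the product group S∞ × S∞ on a complex Hilbert space H. Then any two vectors v, w ∈ H satisfying ρ(g, g)v = v and ρ(g, g)w = w for all g ∈ S∞ are linearly dependent over ℂ; in other words, the subspace of vectors fixed by the diagonal subgroup diag(S∞) has dimension at most 1. (The pair (S∞ × S∞, diag(S∞)) is spherical.) -/

import Mathlib

open scoped InnerProductSpace

/-- The finitary symmetric group of a countable set: permutations with finite support. -/
def finitarySymm (Ω : Type*) : Subgroup (Equiv.Perm Ω) where
  carrier := {g | {x | g x ≠ x}.Finite}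
  one_mem' := by simp
  mul_mem' := by
    intro a b ha hb
    refine Set.Finite.subset (ha.union hb) fun x hx => ?_
    simp only [Set.mem_setOf_eq, Equiv.Perm.mul_apply] at hx
    simp only [Set.mem_union, Set.mem_setOf_eq]
    by_cases h : b x = x
    · exact Or.inl (by simpa [h] using hx)
    · exact Or.inr h
  inv_mem' := by
    intro a ha
    refine Set.Finite.subset ha fun x hx => ?_
    simp only [Set.mem_setOf_eq] at hx ⊢
    intro h
    apply hx
    nth_rewrite 1 [← h]
    exact Equiv.symm_apply_apply a x

/-- `S∞`, the finitary symmetric group of `ℕ`. -/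
abbrev SInf := ↥(finitarySymm ℕ)

/-- Irreducibility of a unitary representation: the space is nonzero and the only
invariant closed subspaces are `⊥` and `⊤`. -/
def IsIrreducibleRep {G : Type*} [Group G] {H : Type*} [NormedAddCommGroup H]
    [InnerProductSpace ℂ H] [CompleteSpace H] (ρ : G →* unitary (H →L[ℂ] H)) : Prop :=
  (∃ v : H, v ≠ 0) ∧
    ∀ V : Submodule ℂ H, IsClosed (V : Set H) →
      (∀ (g : G), ∀ v ∈ V, (ρ g : H →L[ℂ] H) v ∈ V) → V = ⊥ ∨ V = ⊤

/-!
For `g ∈ S∞`, conjugating `g` by permutations `t k` that push its support off to infinity gives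
elements `(t k)⁻¹ * g * t k` that eventually commute with any given element of `S∞`. A
weak-operator cluster point `T` of `ρ ((t k)⁻¹ * g * t k, 1)` therefore commutes with `ρ`, hence
is a scalar `c • 1` by Schur's lemma, while on diagonally fixed vectors `ξ, η` every coefficient
`⟪η, ρ ((t k)⁻¹ * g * t k, 1) ξ⟫` equals `⟪η, ρ (g, 1) ξ⟫`. Since `(a, b) = (a * b⁻¹, 1) * (b, b)`,
this gives `⟪η, ρ p ξ⟫ = c_p * ⟪η, ξ⟫` for every `p`. So a fixed vector orthogonal to a nonzero
fixed vector `v` is orthogonal to the whole orbit of `v`, which spans a dense subspace by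
irreducibility.
-/

open Filter Topology
open scoped ComplexStarModule

theorem mem_finitarySymm_nat_iff {a : Equiv.Perm ℕ} :
    a ∈ finitarySymm ℕ ↔ ∃ N, ∀ x, N ≤ x → a x = x := by
  constructor
  · intro ha
    obtain ⟨b, hb⟩ := (show {x | a x ≠ x}.Finite from ha).bddAbove
    exact ⟨b + 1, fun x hx => by_contra fun h => by have := hb h; omega⟩
  · rintro ⟨N, hN⟩
    exact (Set.finite_Iio N).subset fun x hx => by_contra fun h => hx (hN x (not_lt.1 h))

def blockSwapFun (n m : ℕ) (x : ℕ) : ℕ :=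
  if x < n then x + m else if m ≤ x ∧ x < m + n then x - m else x

theorem blockSwapFun_involutive {n m : ℕ} (h : n ≤ m) : (blockSwapFun n m).Involutive := by
  intro x
  unfold blockSwapFun
  split_ifs <;> omega

def blockSwap (n k : ℕ) : SInf :=
  ⟨(blockSwapFun_involutive (Nat.le_add_right n k)).toPerm,
    mem_finitarySymm_nat_iff.2 ⟨n + k + n, fun x hx => by
      simp only [Function.Involutive.coe_toPerm, blockSwapFun]
      split_ifs <;> omega⟩⟩

theorem le_blockSwap_apply {n k x : ℕ} (hx : x < n + k) :
    n ≤ (blockSwap n k : Equiv.Perm ℕ) x := by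
  change n ≤ blockSwapFun n (n + k) x
  unfold blockSwapFun
  split_ifs <;> omega

theorem exists_conj_eventually_commute (g : SInf) :
    ∃ t : ℕ → SInf, ∀ a : SInf, ∀ᶠ k in atTop, Commute ((t k)⁻¹ * g * t k) a := by
  obtain ⟨n, hg⟩ := mem_finitarySymm_nat_iff.1 g.2
  refine ⟨blockSwap n, fun a => ?_⟩
  obtain ⟨N, ha⟩ := mem_finitarySymm_nat_iff.1 a.2
  filter_upwards [eventually_ge_atTop N] with k hk
  have hdisj : ((blockSwap n k)⁻¹ * g * blockSwap n k : Equiv.Perm ℕ).Disjoint a := by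
    intro x
    rcases lt_or_ge x (n + k) with hx | hx
    · left
      simp [Equiv.Perm.mul_apply, hg _ (le_blockSwap_apply hx)]
    · exact Or.inr (ha x (by omega))
  exact Subtype.ext hdisj.commute

section WeakOperatorLimit

open ContinuousLinearMapWOT

variable {𝕜 H : Type*} [RCLike 𝕜] [NormedAddCommGroup H] [InnerProductSpace 𝕜 H]

theorem ContinuousLinearMap.exists_tendsto_ofCLM_of_norm_le [CompleteSpace H] {ι : Type*}
    (𝒰 : Ultrafilter ι) (A : ι → H →L[𝕜] H) {C : ℝ} (hA : ∀ i, ‖A i‖ ≤ C) :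
    ∃ T : H →L[𝕜] H, Tendsto (fun i => ofCLM (A i)) 𝒰 (𝓝 (ofCLM T)) := by
  have hbound : ∀ y x i, ‖⟪y, A i x⟫_𝕜‖ ≤ C * ‖y‖ * ‖x‖ := fun y x i =>
    calc ‖⟪y, A i x⟫_𝕜‖ ≤ ‖y‖ * (C * ‖x‖) :=
          (norm_inner_le_norm _ _).trans
            (mul_le_mul_of_nonneg_left ((A i).le_of_opNorm_le (hA i) x) (norm_nonneg y))
      _ = C * ‖y‖ * ‖x‖ := by ring
  have hlim : ∀ y x, ∃ c, Tendsto (fun i => ⟪y, A i x⟫_𝕜) 𝒰 (𝓝 c) := fun y x =>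
    let ⟨c, _, hc⟩ := (isCompact_closedBall (0 : 𝕜) (C * ‖y‖ * ‖x‖)).ultrafilter_le_nhds
      (𝒰.map fun i => ⟪y, A i x⟫_𝕜)
      (le_principal_iff.2 (mem_map.2
        (univ_mem' fun i => mem_closedBall_zero_iff.2 (hbound y x i))))
    ⟨c, hc⟩
  choose L hL using hlim
  have huniq : ∀ {y x c}, Tendsto (fun i => ⟪y, A i x⟫_𝕜) 𝒰 (𝓝 c) → L y x = c :=
    fun h => tendsto_nhds_unique (hL _ _) h
  -- `L` is a bounded sesquilinear form: Riesz writes it as `⟪S y, x⟫`, and `T = S†`.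
  let B : H →L⋆[𝕜] H →L[𝕜] 𝕜 :=
    LinearMap.mkContinuous₂
      (LinearMap.mk₂'ₛₗ (starRingEnd 𝕜) (RingHom.id 𝕜) L
        (fun y y' x => huniq (by simpa only [inner_add_left] using (hL y x).add (hL y' x)))
        (fun c y x => huniq (by
          simpa only [inner_smul_left, smul_eq_mul] using (hL y x).const_mul _))
        (fun y x x' => huniq (by
          simpa only [map_add, inner_add_right] using (hL y x).add (hL y x')))
        (fun c y x => huniq (by
          simpa only [map_smul, inner_smul_right, smul_eq_mul, RingHom.id_apply] using
            (hL y x).const_mul c)))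
      C fun y x => le_of_tendsto (hL y x).norm (Eventually.of_forall (hbound y x))
  refine ⟨(InnerProductSpace.continuousLinearMapOfBilin B).adjoint,
    tendsto_iff_forall_inner_apply_tendsto.2 fun x y => ?_⟩
  simpa [ContinuousLinearMap.adjoint_inner_right,
    InnerProductSpace.continuousLinearMapOfBilin_apply, B] using hL y x

theorem ContinuousLinearMap.commute_of_tendsto_ofCLM {ι : Type*} {l : Filter ι} [l.NeBot]
    {A : ι → H →L[𝕜] H} {T U : H →L[𝕜] H}
    (hA : Tendsto (fun i => ofCLM (A i)) l (𝓝 (ofCLM T)))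
    (hU : ∀ᶠ i in l, Commute (A i) U) : Commute T U := by
  have hright : Tendsto (fun i => ofCLM (A i * U)) l (𝓝 (ofCLM (T * U))) :=
    ((continuous_precomp (ofCLM U)).tendsto _).comp hA
  have hleft : Tendsto (fun i => ofCLM (U * A i)) l (𝓝 (ofCLM (U * T))) :=
    ((continuous_postcomp (ofCLM U)).tendsto _).comp hA
  exact ofCLM_injective
    (tendsto_nhds_unique (hright.congr' (hU.mono fun i h => by rw [h.eq])) hleft)

end WeakOperatorLimit

section UnitaryRepresentation

variable {G H : Type*} [Group G] [NormedAddCommGroup H] [InnerProductSpace ℂ H] [CompleteSpace H]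
  (ρ : G →* unitary (H →L[ℂ] H))

theorem coe_map_mul_apply (p q : G) (x : H) :
    (ρ (p * q) : H →L[ℂ] H) x = (ρ p : H →L[ℂ] H) ((ρ q : H →L[ℂ] H) x) := by
  rw [map_mul]
  rfl

theorem inner_apply_inv_apply_eq_inner {q : G} {η : H} (hη : (ρ q : H →L[ℂ] H) η = η)
    (z : H) : ⟪η, (ρ q⁻¹ : H →L[ℂ] H) z⟫_ℂ = ⟪η, z⟫_ℂ :=
  calc ⟪η, (ρ q⁻¹ : H →L[ℂ] H) z⟫_ℂ
      = ⟪(ρ q : H →L[ℂ] H) η, (ρ q : H →L[ℂ] H) ((ρ q⁻¹ : H →L[ℂ] H) z)⟫_ℂ := by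
        rw [Unitary.inner_map_map]
    _ = ⟪η, z⟫_ℂ := by
        rw [hη, ← coe_map_mul_apply, mul_inv_cancel, map_one]
        rfl

theorem star_coe_map (g : G) : star (ρ g : H →L[ℂ] H) = ρ g⁻¹ := by
  rw [← Unitary.coe_star, Unitary.star_eq_inv, map_inv]

end UnitaryRepresentation

namespace IsIrreducibleRep

variable {G H : Type*} [Group G] [NormedAddCommGroup H] [InnerProductSpace ℂ H] [CompleteSpace H]
  {ρ : G →* unitary (H →L[ℂ] H)}

theorem eq_zero_of_forall_inner_apply_eq_zero (hirr : IsIrreducibleRep ρ) {v η : H}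
    (hv : v ≠ 0) (h : ∀ g, ⟪η, (ρ g : H →L[ℂ] H) v⟫_ℂ = 0) : η = 0 := by
  let V : Submodule ℂ H :=
    ⨅ g, LinearMap.ker (((innerSL ℂ η).comp (ρ g : H →L[ℂ] H)) : H →ₗ[ℂ] ℂ)
  have hmem : ∀ z, z ∈ V ↔ ∀ g, ⟪η, (ρ g : H →L[ℂ] H) z⟫_ℂ = 0 := fun z => by
    simp [V, Submodule.mem_iInf]
  have hclosed : IsClosed (V : Set H) := by
    simpa only [V, Submodule.coe_iInf] using
      isClosed_iInter fun g => ContinuousLinearMap.isClosed_ker _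
  have hinv : ∀ g, ∀ z ∈ V, (ρ g : H →L[ℂ] H) z ∈ V := fun g z hz => (hmem _).2 fun g' => by
    simpa only [coe_map_mul_apply] using (hmem z).1 hz (g' * g)
  have hV : V = ⊤ := (hirr.2 V hclosed hinv).resolve_left fun hbot =>
    hv (by simpa [hbot] using (hmem v).2 h)
  simpa using (hmem η).1 (hV ▸ Submodule.mem_top) 1

theorem eq_zero_or_eq_zero_of_mul_eq_zero (hirr : IsIrreducibleRep ρ) {S T : H →L[ℂ] H}
    (hS : ∀ g, Commute (ρ g : H →L[ℂ] H) S) (hST : S * T = 0) : S = 0 ∨ T = 0 := by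
  have hinv : ∀ g, ∀ z ∈ LinearMap.ker (S : H →ₗ[ℂ] H),
      (ρ g : H →L[ℂ] H) z ∈ LinearMap.ker (S : H →ₗ[ℂ] H) := fun g z hz => by
    simp only [LinearMap.mem_ker, ContinuousLinearMap.coe_coe] at hz ⊢
    rw [← mul_apply_eq_comp, ← (hS g).eq, mul_apply_eq_comp, hz, map_zero]
  rcases hirr.2 _ (ContinuousLinearMap.isClosed_ker S) hinv with hker | hker
  · right
    ext x
    have : T x ∈ LinearMap.ker (S : H →ₗ[ℂ] H) := by
      simp [LinearMap.mem_ker, ← mul_apply_eq_comp, hST]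
    simpa [hker] using this
  · left
    ext x
    simpa using (hker ▸ Submodule.mem_top : x ∈ LinearMap.ker (S : H →ₗ[ℂ] H))

theorem spectrum_subsingleton (hirr : IsIrreducibleRep ρ) {A : H →L[ℂ] H}
    (hA : IsSelfAdjoint A) (hcomm : ∀ g, Commute (ρ g : H →L[ℂ] H) A) :
    (spectrum ℝ A).Subsingleton := by
  suffices h : ∀ x ∈ spectrum ℝ A, ∀ y ∈ spectrum ℝ A, ¬ x < y from
    fun x hx y hy => le_antisymm (not_lt.1 (h y hy x hx)) (not_lt.1 (h x hx y hy))
  intro x hx y hy hxy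
  obtain ⟨m, hxm, hmy⟩ := exists_between hxy
  have hmul : cfc (fun t => max (t - m) 0) A * cfc (fun t => max (m - t) 0) A = 0 := by
    rw [← cfc_mul .., ← cfc_zero ℝ A]
    exact cfc_congr fun t _ => by rcases le_total t m with h | h <;> simp [h]
  have hcomm' : ∀ g, Commute (ρ g : H →L[ℂ] H) (cfc (fun t => max (t - m) 0) A) :=
    fun g => ((hcomm g).symm.cfc_real _).symm
  rcases hirr.eq_zero_or_eq_zero_of_mul_eq_zero hcomm' hmul with h | h
  · have heq := eqOn_of_cfc_eq_cfc (h.trans (cfc_zero ℝ A).symm)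
    linarith [max_eq_right_iff.1 (heq hy)]
  · have heq := eqOn_of_cfc_eq_cfc (h.trans (cfc_zero ℝ A).symm)
    linarith [max_eq_right_iff.1 (heq hx)]

theorem exists_eq_algebraMap_of_isSelfAdjoint (hirr : IsIrreducibleRep ρ) {A : H →L[ℂ] H}
    (hA : IsSelfAdjoint A) (hcomm : ∀ g, Commute (ρ g : H →L[ℂ] H) A) :
    ∃ r : ℝ, A = algebraMap ℝ (H →L[ℂ] H) r := by
  obtain ⟨v, hv⟩ := hirr.1
  have : Nontrivial H := ⟨⟨v, 0, hv⟩⟩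
  obtain ⟨r, hr⟩ := ContinuousFunctionalCalculus.spectrum_nonempty (R := ℝ) A hA
  exact ⟨r, CFC.eq_algebraMap_of_spectrum_subset_singleton A r
    fun s hs => hirr.spectrum_subsingleton hA hcomm hs hr⟩

theorem exists_eq_smul_one (hirr : IsIrreducibleRep ρ) {T : H →L[ℂ] H}
    (hT : ∀ g, Commute (ρ g : H →L[ℂ] H) T) : ∃ c : ℂ, T = c • 1 := by
  have hTstar : ∀ g, Commute (ρ g : H →L[ℂ] H) (star T) := fun g => by
    simpa only [star_coe_map, inv_inv, star_star] using (hT g⁻¹).star_star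
  obtain ⟨a, ha⟩ := hirr.exists_eq_algebraMap_of_isSelfAdjoint (ℜ T).2 fun g => by
    rw [realPart_apply_coe]
    exact ((hT g).add_right (hTstar g)).smul_right _
  obtain ⟨b, hb⟩ := hirr.exists_eq_algebraMap_of_isSelfAdjoint (ℑ T).2 fun g => by
    rw [imaginaryPart_apply_coe]
    exact (((hT g).sub_right (hTstar g)).smul_right _).smul_right _
  refine ⟨a + Complex.I * b, ?_⟩
  rw [← realPart_add_I_smul_imaginaryPart T, ha, hb, Algebra.algebraMap_eq_smul_one,
    Algebra.algebraMap_eq_smul_one, add_smul, mul_smul, Complex.coe_smul, Complex.coe_smul]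

end IsIrreducibleRep

section DiagonallyFixed

variable {G H : Type*} [Group G] [NormedAddCommGroup H] [InnerProductSpace ℂ H] [CompleteSpace H]
  (ρ : G × G →* unitary (H →L[ℂ] H))

def IsDiagFixed (v : H) : Prop :=
  ∀ g : G, (ρ (g, g) : H →L[ℂ] H) v = v

theorem exists_commute_inner_eq {g : G} {t : ℕ → G}
    (ht : ∀ a, ∀ᶠ k in atTop, Commute ((t k)⁻¹ * g * t k) a) :
    ∃ T : H →L[ℂ] H, (∀ p, Commute (ρ p : H →L[ℂ] H) T) ∧
      ∀ ξ η : H, IsDiagFixed ρ ξ → IsDiagFixed ρ η →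
        ⟪η, T ξ⟫_ℂ = ⟪η, (ρ (g, 1) : H →L[ℂ] H) ξ⟫_ℂ := by
  let A : ℕ → H →L[ℂ] H := fun k => ρ ((t k)⁻¹ * g * t k, 1)
  obtain ⟨T, hT⟩ := ContinuousLinearMap.exists_tendsto_ofCLM_of_norm_le (Ultrafilter.of atTop) A
    (C := 1) fun k =>
      ContinuousLinearMap.opNorm_le_bound _ zero_le_one fun x => by rw [Unitary.norm_map, one_mul]
  have hle : ((Ultrafilter.of atTop : Ultrafilter ℕ) : Filter ℕ) ≤ atTop := Ultrafilter.of_le _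
  refine ⟨T, fun p => (ContinuousLinearMap.commute_of_tendsto_ofCLM hT ?_).symm,
    fun ξ η hξ hη => ?_⟩
  · filter_upwards [hle (ht p.1)] with k hk
    have hk' : Commute (((t k)⁻¹ * g * t k, 1) : G × G) p := Prod.ext hk (Commute.one_left _)
    exact congrArg Subtype.val (hk'.map ρ).eq
  · have hconst : ∀ k, ⟪η, A k ξ⟫_ℂ = ⟪η, (ρ (g, 1) : H →L[ℂ] H) ξ⟫_ℂ := fun k => by
      have hA : (((t k)⁻¹ * g * t k, 1) : G × G) = (t k, t k)⁻¹ * (g, 1) * (t k, t k) := by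
        ext <;> simp
      simp only [A, hA, coe_map_mul_apply, hξ (t k)]
      exact inner_apply_inv_apply_eq_inner ρ (hη (t k)) _
    exact tendsto_nhds_unique
      ((ContinuousLinearMapWOT.tendsto_iff_forall_inner_apply_tendsto.1 hT ξ η).congr hconst)
      tendsto_const_nhds

theorem exists_inner_apply_eq_mul_inner (hirr : IsIrreducibleRep ρ)
    (hconj : ∀ g : G, ∃ t : ℕ → G, ∀ a, ∀ᶠ k in atTop, Commute ((t k)⁻¹ * g * t k) a)
    (p : G × G) : ∃ c : ℂ, ∀ ξ η : H, IsDiagFixed ρ ξ → IsDiagFixed ρ η →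
      ⟪η, (ρ p : H →L[ℂ] H) ξ⟫_ℂ = c * ⟪η, ξ⟫_ℂ := by
  obtain ⟨a, b⟩ := p
  obtain ⟨t, ht⟩ := hconj (a * b⁻¹)
  obtain ⟨T, hTcomm, hT⟩ := exists_commute_inner_eq ρ ht
  obtain ⟨c, rfl⟩ := hirr.exists_eq_smul_one hTcomm
  refine ⟨c, fun ξ η hξ hη => ?_⟩
  have hab : ((a, b) : G × G) = (a * b⁻¹, 1) * (b, b) := by ext <;> simp
  rw [hab, coe_map_mul_apply, hξ, ← hT ξ η hξ hη]
  simp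

end DiagonallyFixed

theorem dim_diag_fixed_le_one {H : Type*} [NormedAddCommGroup H] [InnerProductSpace ℂ H]
    [CompleteSpace H] (ρ : SInf × SInf →* unitary (H →L[ℂ] H))
    (hirr : IsIrreducibleRep ρ) (v w : H)
    (hv : ∀ g : SInf, (ρ (g, g) : H →L[ℂ] H) v = v)
    (hw : ∀ g : SInf, (ρ (g, g) : H →L[ℂ] H) w = w) :
    ∃ a b : ℂ, (a ≠ 0 ∨ b ≠ 0) ∧ a • v + b • w = 0 := by
  by_cases hv0 : v = 0
  · exact ⟨1, 0, Or.inl one_ne_zero, by simp [hv0]⟩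
  set c := ⟪v, w⟫_ℂ / ⟪v, v⟫_ℂ
  have hfix : IsDiagFixed ρ (w - c • v) := fun g => by
    rw [map_sub, map_smul, hv, hw]
  have horth : ⟪w - c • v, v⟫_ℂ = 0 := by
    rw [inner_eq_zero_symm, inner_sub_right, inner_smul_right,
      div_mul_cancel₀ _ (inner_self_ne_zero.2 hv0), sub_self]
  have hzero : w - c • v = 0 := hirr.eq_zero_of_forall_inner_apply_eq_zero hv0 fun p => by
    obtain ⟨a, ha⟩ := exists_inner_apply_eq_mul_inner ρ hirr exists_conj_eventually_commute p
    rw [ha v _ hv hfix, horth, mul_zero]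
  refine ⟨c, -1, Or.inr (by norm_num), ?_⟩
  rw [neg_one_smul, ← sub_eq_add_neg, ← neg_sub, hzero, neg_zero]
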